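/- arXiv:1606.05861 — 4 statements merged into one kernel-verified Lean document; each statement's English description precedes it below -/
import Mathlib

section
/- Let A and B be measurable subsets of ℝⁿ. The following are equivalent, and when one holds the constants C₁ and C₂ can be chosen equal: (i) there exists C₁ > 0 such that for each f ∈ L²(ℝⁿ;ℂ), ∫_{ℝⁿ} |f(x)|² dx ≤ C₁ ( ∫_A |f(x)|² dx + ∫_B |f̂(ξ)|² dξ ); (ii) there exists C₂ > 0 such that for each T > 0 and each u₀ ∈ L²(ℝⁿ;ℂ), ∫_{ℝⁿ} |u₀(x)|² dx ≤ C₂ ( ∫_A |u₀(x)|² dx + ∫_{2T·B} |u(x,T;u₀)|² dx ), where 2T·B = {2Tx : x ∈ B}. -/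
open MeasureTheory Filter Metric
open scoped Real RealInnerProductSpace ENNReal Topology

/-- The Fourier transform with the normalization
`f̂(ξ) = (2π)^{-n/2} ∫ f(x) e^{-i x·ξ} dx`. -/
noncomputable def fourierTransformPaper (n : ℕ) (f : EuclideanSpace ℝ (Fin n) → ℂ)
    (ξ : EuclideanSpace ℝ (Fin n)) : ℂ :=
  (((2 * Real.pi) ^ (-(n : ℝ) / 2) : ℝ) : ℂ) *
    ∫ x : EuclideanSpace ℝ (Fin n), Complex.exp (-Complex.I * (⟪x, ξ⟫ : ℝ)) * f x

/-- The solution `u(·,t;f) = e^{itΔ} f` of the free Schrödinger equation with (nice) initial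
datum `f`, obtained by Fourier inversion of `e^{-it|ξ|²} f̂(ξ)`. -/
noncomputable def schrodingerSol (n : ℕ) (f : EuclideanSpace ℝ (Fin n) → ℂ) (t : ℝ)
    (x : EuclideanSpace ℝ (Fin n)) : ℂ :=
  (((2 * Real.pi) ^ (-(n : ℝ) / 2) : ℝ) : ℂ) *
    ∫ ξ : EuclideanSpace ℝ (Fin n),
      Complex.exp (Complex.I * ((⟪x, ξ⟫ - t * ‖ξ‖ ^ 2 : ℝ) : ℂ)) * fourierTransformPaper n f ξ

/-- `f ∈ C₀^∞(ℝⁿ; ℂ)`. -/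
def IsTestFun (n : ℕ) (f : EuclideanSpace ℝ (Fin n) → ℂ) : Prop :=
  ContDiff ℝ (⊤ : ℕ∞) f ∧ HasCompactSupport f

/-- `v = u(·,t;u₀) = e^{itΔ} u₀` for `u₀ ∈ L²(ℝⁿ;ℂ)`: `v` is the `L²` function obtained by
extending the solution map from smooth compactly supported data by density (the solution map
is an `L²` isometry, so this determines `v` a.e. uniquely). -/
def IsFreeSchrodingerSol (n : ℕ) (u₀ : EuclideanSpace ℝ (Fin n) → ℂ) (t : ℝ)
    (v : EuclideanSpace ℝ (Fin n) → ℂ) : Prop :=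
  MemLp u₀ 2 (volume : Measure (EuclideanSpace ℝ (Fin n))) ∧
  MemLp v 2 (volume : Measure (EuclideanSpace ℝ (Fin n))) ∧
  ∃ φ : ℕ → EuclideanSpace ℝ (Fin n) → ℂ,
    (∀ k, IsTestFun n (φ k)) ∧
    Tendsto (fun k => eLpNorm (fun x => u₀ x - φ k x) 2 volume) atTop (𝓝 0) ∧
    Tendsto (fun k => eLpNorm (fun x => v x - schrodingerSol n (φ k) t x) 2 volume) atTop (𝓝 0)

/-- `g = f̂` for `f ∈ L²(ℝⁿ;ℂ)`: the Fourier transform of `f` in the `L²` (Plancherel) sense,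
i.e. the `L²`-density extension of the Fourier transform from smooth compactly supported
functions (which is an `L²` isometry, so `g` is determined a.e. uniquely). -/
def IsL2FourierPair (n : ℕ) (f g : EuclideanSpace ℝ (Fin n) → ℂ) : Prop :=
  MemLp f 2 (volume : Measure (EuclideanSpace ℝ (Fin n))) ∧
  MemLp g 2 (volume : Measure (EuclideanSpace ℝ (Fin n))) ∧
  ∃ φ : ℕ → EuclideanSpace ℝ (Fin n) → ℂ,
    (∀ k, IsTestFun n (φ k)) ∧
    Tendsto (fun k => eLpNorm (fun x => f x - φ k x) 2 volume) atTop (𝓝 0) ∧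
    Tendsto (fun k => eLpNorm (fun ξ => g ξ - fourierTransformPaper n (φ k) ξ) 2 volume) atTop (𝓝 0)

/-- The uncertainty-principle inequality for the pair of sets `(A, B)` with constant `C`. -/
def UncertaintyIneq (n : ℕ) (A B : Set (EuclideanSpace ℝ (Fin n))) (C : ℝ) : Prop :=
  ∀ f g : EuclideanSpace ℝ (Fin n) → ℂ, IsL2FourierPair n f g →
    (∫ x, ‖f x‖ ^ 2) ≤ C * ((∫ x in A, ‖f x‖ ^ 2) + ∫ ξ in B, ‖g ξ‖ ^ 2)

/-- The observability inequality at one point in time for `(A, 2T·B)` with constant `C`. -/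
def ObservabilityIneq (n : ℕ) (A B : Set (EuclideanSpace ℝ (Fin n))) (C : ℝ) : Prop :=
  ∀ T : ℝ, 0 < T → ∀ u₀ v : EuclideanSpace ℝ (Fin n) → ℂ,
    IsFreeSchrodingerSol n u₀ T v →
    (∫ x, ‖u₀ x‖ ^ 2) ≤
      C * ((∫ x in A, ‖u₀ x‖ ^ 2) + ∫ x in (fun y => (2 * T) • y) '' B, ‖v x‖ ^ 2)


open Complex FourierTransform

noncomputable def toSchwartz {n : ℕ} (f : EuclideanSpace ℝ (Fin n) → ℂ)
    (h1 : ContDiff ℝ (⊤ : ℕ∞) f) (h2 : HasCompactSupport f) :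
    SchwartzMap (EuclideanSpace ℝ (Fin n)) ℂ where
  toFun := f
  smooth' := h1.of_le (by simp)
  decay' := by
    intro k m
    have hc : Continuous fun x : EuclideanSpace ℝ (Fin n) =>
        ‖x‖ ^ k * ‖iteratedFDeriv ℝ m f x‖ :=
      (continuous_norm.pow k).mul ((h1.of_le le_rfl).continuous_iteratedFDeriv (by exact_mod_cast (le_top : (m : ℕ∞) ≤ ⊤))).norm
    have hcs : HasCompactSupport fun x : EuclideanSpace ℝ (Fin n) =>
        ‖x‖ ^ k * ‖iteratedFDeriv ℝ m f x‖ := ((h2.iteratedFDeriv m).norm).mul_left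
    obtain ⟨C, hC⟩ := hc.bounded_above_of_compact_support hcs
    refine ⟨C, fun x => ?_⟩
    have := hC x
    rwa [Real.norm_eq_abs, _root_.abs_of_nonneg (by positivity)] at this

lemma paperFT_eq {n : ℕ} (φ : EuclideanSpace ℝ (Fin n) → ℂ) (ξ : EuclideanSpace ℝ (Fin n)) :
    fourierTransformPaper n φ ξ =
      (((2 * Real.pi) ^ (-(n : ℝ) / 2) : ℝ) : ℂ) * (𝓕 φ) ((2 * Real.pi)⁻¹ • ξ) := by
  unfold fourierTransformPaper
  congr 1
  rw [Real.fourier_eq']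
  congr 1 with x
  rw [smul_eq_mul]
  have h1 : ⟪x, (2 * Real.pi)⁻¹ • ξ⟫ = (2 * Real.pi)⁻¹ * ⟪x, ξ⟫ := real_inner_smul_right x ξ _
  have h2 : -2 * Real.pi * ⟪x, (2 * Real.pi)⁻¹ • ξ⟫ = -⟪x, ξ⟫ := by
    rw [h1]; field_simp
  rw [h2]
  congr 1
  push_cast
  ring

lemma integrable_paperFT {n : ℕ} {φ : EuclideanSpace ℝ (Fin n) → ℂ} (hφ : IsTestFun n φ) :
    Integrable (fourierTransformPaper n φ) volume := by
  have hS : Integrable (𝓕 φ) volume := by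
    have := SchwartzMap.integrable (μ := (volume : Measure (EuclideanSpace ℝ (Fin n))))
      (SchwartzMap.fourierTransformCLM ℝ (toSchwartz φ hφ.1 hφ.2))
    rw [SchwartzMap.fourierTransformCLM_apply, SchwartzMap.fourier_coe] at this
    exact this
  have h2 : Integrable (fun ξ : EuclideanSpace ℝ (Fin n) => (𝓕 φ) ((2 * Real.pi)⁻¹ • ξ)) volume :=
    (integrable_comp_smul_iff volume (𝓕 φ)
      (by positivity : ((2 * Real.pi)⁻¹ : ℝ) ≠ 0)).2 hS
  exact (h2.const_mul _).congr (ae_of_all _ fun ξ => (paperFT_eq φ ξ).symm)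

lemma gauss_step {n : ℕ} {φ : EuclideanSpace ℝ (Fin n) → ℂ} (hφ : IsTestFun n φ)
    {b : ℂ} (hb : 0 < b.re) (x : EuclideanSpace ℝ (Fin n)) :
    ∫ ξ : EuclideanSpace ℝ (Fin n),
        Complex.exp (-b * ‖ξ‖ ^ 2 + I * ⟪x, ξ⟫) * fourierTransformPaper n φ ξ
      = (((2 * Real.pi) ^ (-(n : ℝ) / 2) : ℝ) : ℂ) * (((Real.pi : ℂ) / b) ^ ((n : ℂ) / 2) *
          ∫ y : EuclideanSpace ℝ (Fin n), Complex.exp (-(‖x - y‖ : ℂ) ^ 2 / (4 * b)) * φ y) := by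
  set K : ℂ := (((2 * Real.pi) ^ (-(n : ℝ) / 2) : ℝ) : ℂ) with hK
  have hφc : Continuous φ := hφ.1.continuous
  have hφi : Integrable φ volume := hφc.integrable_of_hasCompactSupport hφ.2
  have hA : Integrable (fun ξ : EuclideanSpace ℝ (Fin n) =>
      Complex.exp (-b * ‖ξ‖ ^ 2 + I * ⟪x, ξ⟫)) volume :=
    GaussianFourier.integrable_cexp_neg_mul_sq_norm_add hb I x
  have step1 : ∀ ξ : EuclideanSpace ℝ (Fin n),
      Complex.exp (-b * ‖ξ‖ ^ 2 + I * ⟪x, ξ⟫) * fourierTransformPaper n φ ξ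
        = K * ∫ y, Complex.exp (-b * ‖ξ‖ ^ 2 + I * ⟪x, ξ⟫) *
            (Complex.exp (-I * ⟪y, ξ⟫) * φ y) := by
    intro ξ
    unfold fourierTransformPaper
    rw [mul_left_comm, ← integral_const_mul]
  rw [integral_congr_ae (ae_of_all _ step1), integral_const_mul]
  have hint : Integrable (Function.uncurry fun ξ y =>
      Complex.exp (-b * ‖ξ‖ ^ 2 + I * ⟪x, ξ⟫) * (Complex.exp (-I * ⟪y, ξ⟫) * φ y))
      (volume.prod volume) := by
    have hbm : Integrable (fun p : (EuclideanSpace ℝ (Fin n)) × (EuclideanSpace ℝ (Fin n)) =>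
        ‖Complex.exp (-b * ‖p.1‖ ^ 2 + I * ⟪x, p.1⟫)‖ * ‖φ p.2‖) (volume.prod volume) :=
      hA.norm.mul_prod hφi.norm
    refine hbm.mono' ?_ (ae_of_all _ fun p => ?_)
    · apply Continuous.aestronglyMeasurable
      have h1 : Continuous fun p : (EuclideanSpace ℝ (Fin n)) × (EuclideanSpace ℝ (Fin n)) =>
          (-b * ((‖p.1‖ : ℝ) : ℂ) ^ 2 + I * ((⟪x, p.1⟫ : ℝ) : ℂ)) := by
        apply Continuous.add
        · exact continuous_const.mul
            ((Complex.continuous_ofReal.comp (continuous_norm.comp continuous_fst)).pow 2)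
        · exact continuous_const.mul
            (Complex.continuous_ofReal.comp (continuous_const.inner continuous_fst))
      have h2 : Continuous fun p : (EuclideanSpace ℝ (Fin n)) × (EuclideanSpace ℝ (Fin n)) =>
          (-I * ((⟪p.2, p.1⟫ : ℝ) : ℂ)) :=
        continuous_const.mul
          (Complex.continuous_ofReal.comp (continuous_snd.inner continuous_fst))
      exact (Complex.continuous_exp.comp h1).mul
        ((Complex.continuous_exp.comp h2).mul (hφc.comp continuous_snd))
    · rw [Function.uncurry]
      simp only [norm_mul]
      have h1 : ‖Complex.exp (-I * ((⟪p.2, p.1⟫ : ℝ) : ℂ))‖ = 1 := by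
        rw [Complex.norm_exp]
        simp
      rw [h1, one_mul]
  rw [integral_integral_swap hint]
  have inner_eq : ∀ y : EuclideanSpace ℝ (Fin n),
      (∫ ξ, Complex.exp (-b * ‖ξ‖ ^ 2 + I * ⟪x, ξ⟫) * (Complex.exp (-I * ⟪y, ξ⟫) * φ y))
        = ((Real.pi : ℂ) / b) ^ ((n : ℂ) / 2) *
            (Complex.exp (-(‖x - y‖ : ℂ) ^ 2 / (4 * b)) * φ y) := by
    intro y
    have e1 : ∀ ξ : EuclideanSpace ℝ (Fin n),
        Complex.exp (-b * ‖ξ‖ ^ 2 + I * ⟪x, ξ⟫) * (Complex.exp (-I * ⟪y, ξ⟫) * φ y)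
          = Complex.exp (-b * ‖ξ‖ ^ 2 + I * ⟪x - y, ξ⟫) * φ y := by
      intro ξ
      rw [← mul_assoc, ← Complex.exp_add]
      congr 2
      have h2 : ⟪x - y, ξ⟫ = ⟪x, ξ⟫ - ⟪y, ξ⟫ := inner_sub_left x y ξ
      rw [h2]
      push_cast
      ring
    rw [integral_congr_ae (ae_of_all _ e1), integral_mul_const,
      GaussianFourier.integral_cexp_neg_mul_sq_norm_add hb I (x - y),
      finrank_euclideanSpace_fin]
    have hI : Complex.I ^ 2 * ((‖x - y‖ : ℝ) : ℂ) ^ 2 / (4 * b) = -((‖x - y‖ : ℝ) : ℂ) ^ 2 / (4 * b) := by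
      rw [Complex.I_sq]; ring
    rw [hI, mul_assoc]
  rw [integral_congr_ae (ae_of_all _ inner_eq), integral_const_mul]

noncomputable def coefT (n : ℕ) (T : ℝ) : ℂ :=
  (((2 * Real.pi) ^ (-(n : ℝ) / 2) : ℝ) : ℂ) *
    ((Real.pi : ℂ) / (Complex.I * T)) ^ ((n : ℂ) / 2)

lemma key_identity {n : ℕ} {T : ℝ} (hT : 0 < T) {φ : EuclideanSpace ℝ (Fin n) → ℂ}
    (hφ : IsTestFun n φ) (x : EuclideanSpace ℝ (Fin n)) :
    schrodingerSol n φ T x = coefT n T * Complex.exp (I * ((‖x‖ ^ 2 / (4 * T) : ℝ) : ℂ)) *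
      fourierTransformPaper n
        (fun y => Complex.exp (I * ((‖y‖ ^ 2 / (4 * T) : ℝ) : ℂ)) * φ y) ((2 * T)⁻¹ • x) := by
  classical
  set K : ℂ := (((2 * Real.pi) ^ (-(n : ℝ) / 2) : ℝ) : ℂ) with hKdef
  have hK0 : K ≠ 0 := by
    simp only [hKdef, ne_eq, Complex.ofReal_eq_zero]
    positivity
  set ψ : EuclideanSpace ℝ (Fin n) → ℂ := fourierTransformPaper n φ with hψdef
  have hψi : Integrable ψ volume := integrable_paperFT hφ
  have hφc : Continuous φ := hφ.1.continuous
  have hφi : Integrable φ volume := hφc.integrable_of_hasCompactSupport hφ.2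
  have hITne : (Complex.I * (T : ℂ)) ≠ 0 :=
    mul_ne_zero Complex.I_ne_zero (by exact_mod_cast hT.ne')
  set bseq : ℕ → ℂ := fun k => ((((k : ℝ) + 1)⁻¹ : ℝ) : ℂ) + Complex.I * T with hbseq
  have hbre : ∀ k, 0 < (bseq k).re := by
    intro k
    have h : (bseq k).re = ((k : ℝ) + 1)⁻¹ := by
      simp only [hbseq, Complex.add_re, Complex.ofReal_re, Complex.mul_re, Complex.I_re,
        Complex.I_im, Complex.ofReal_im]
      ring
    rw [h]; positivity
  have hbne : ∀ k, bseq k ≠ 0 := by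
    intro k h
    have := hbre k
    rw [h] at this; simp at this
  have hbto : Tendsto bseq atTop (𝓝 (Complex.I * T)) := by
    have h0 : Tendsto (fun k : ℕ => ((k : ℝ) + 1)⁻¹) atTop (𝓝 0) := by
      simpa [one_div] using tendsto_one_div_add_atTop_nhds_zero_nat (𝕜 := ℝ)
    have h1 : Tendsto (fun k : ℕ => ((((k : ℝ) + 1)⁻¹ : ℝ) : ℂ)) atTop (𝓝 (0 : ℂ)) :=
      (Complex.continuous_ofReal.tendsto 0).comp h0
    simpa only [zero_add] using h1.add_const (Complex.I * (T : ℂ))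
  -- re of the exponent
  have hre : ∀ (b : ℂ) (r s : ℝ), (-b * ((r : ℝ) : ℂ) ^ 2 + Complex.I * (s : ℂ)).re
      = -b.re * r ^ 2 := by
    intro b r s
    simp [← Complex.ofReal_pow, Complex.add_re, Complex.mul_re]
  -- LHS limit
  have hL1 : Tendsto (fun k => ∫ ξ : EuclideanSpace ℝ (Fin n),
      Complex.exp (-(bseq k) * ‖ξ‖ ^ 2 + Complex.I * ⟪x, ξ⟫) * ψ ξ) atTop
      (𝓝 (∫ ξ : EuclideanSpace ℝ (Fin n),
        Complex.exp (Complex.I * ((⟪x, ξ⟫ - T * ‖ξ‖ ^ 2 : ℝ) : ℂ)) * ψ ξ)) := by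
    apply tendsto_integral_of_dominated_convergence (fun ξ => ‖ψ ξ‖)
    · intro k
      apply AEStronglyMeasurable.mul _ hψi.1
      apply Continuous.aestronglyMeasurable
      apply Complex.continuous_exp.comp
      exact ((continuous_const.mul ((Complex.continuous_ofReal.comp continuous_norm).pow 2)).add
        (continuous_const.mul (Complex.continuous_ofReal.comp
          (continuous_const.inner continuous_id))))
    · exact hψi.norm
    · intro k
      refine ae_of_all _ fun ξ => ?_
      rw [norm_mul]
      have h1 : ‖Complex.exp (-(bseq k) * ((‖ξ‖ : ℝ) : ℂ) ^ 2 + Complex.I * ((⟪x, ξ⟫ : ℝ) : ℂ))‖ ≤ 1 := by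
        rw [Complex.norm_exp, hre]
        rw [Real.exp_le_one_iff]
        have := (hbre k).le
        nlinarith [sq_nonneg ‖ξ‖]
      nlinarith [norm_nonneg (ψ ξ), norm_nonneg (Complex.exp (-(bseq k) * ((‖ξ‖ : ℝ) : ℂ) ^ 2 + Complex.I * ((⟪x, ξ⟫ : ℝ) : ℂ)))]
    · refine ae_of_all _ fun ξ => ?_
      have harg : Tendsto (fun k => -(bseq k) * ((‖ξ‖ : ℝ) : ℂ) ^ 2 + Complex.I * ((⟪x, ξ⟫ : ℝ) : ℂ))
          atTop (𝓝 (Complex.I * ((⟪x, ξ⟫ - T * ‖ξ‖ ^ 2 : ℝ) : ℂ))) := by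
        have := (hbto.neg.mul_const (((‖ξ‖ : ℝ) : ℂ) ^ 2)).add_const
          (Complex.I * ((⟪x, ξ⟫ : ℝ) : ℂ))
        convert this using 2
        push_cast
        ring
      exact (harg.cexp).mul_const (ψ ξ)
  -- rewrite via gauss_step
  have hL2 : Tendsto (fun k => K * (((Real.pi : ℂ) / bseq k) ^ ((n : ℂ) / 2) *
      ∫ y : EuclideanSpace ℝ (Fin n), Complex.exp (-(‖x - y‖ : ℂ) ^ 2 / (4 * bseq k)) * φ y))
      atTop (𝓝 (∫ ξ : EuclideanSpace ℝ (Fin n),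
        Complex.exp (Complex.I * ((⟪x, ξ⟫ - T * ‖ξ‖ ^ 2 : ℝ) : ℂ)) * ψ ξ)) := by
    refine hL1.congr fun k => ?_
    exact gauss_step hφ (hbre k) x
  -- RHS limit
  have hslit : (Real.pi : ℂ) / (Complex.I * T) ∈ Complex.slitPlane := by
    have hTne : (T : ℂ) ≠ 0 := by exact_mod_cast hT.ne'
    have heq : (Real.pi : ℂ) / (Complex.I * T) = -((Real.pi / T : ℝ) : ℂ) * Complex.I := by
      rw [div_eq_iff hITne]
      push_cast
      field_simp
      ring_nf
      rw [Complex.I_sq]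
      ring
    rw [heq, Complex.mem_slitPlane_iff]
    right
    have him : (-((Real.pi / T : ℝ) : ℂ) * Complex.I).im = -(Real.pi / T) := by
      simp
    rw [him]
    have : 0 < Real.pi / T := by positivity
    linarith
  have hR1 : Tendsto (fun k => K * (((Real.pi : ℂ) / bseq k) ^ ((n : ℂ) / 2) *
      ∫ y : EuclideanSpace ℝ (Fin n), Complex.exp (-(‖x - y‖ : ℂ) ^ 2 / (4 * bseq k)) * φ y))
      atTop (𝓝 (K * (((Real.pi : ℂ) / (Complex.I * T)) ^ ((n : ℂ) / 2) *
        ∫ y : EuclideanSpace ℝ (Fin n),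
          Complex.exp (-(‖x - y‖ : ℂ) ^ 2 / (4 * (Complex.I * T))) * φ y))) := by
    apply Tendsto.const_mul
    apply Tendsto.mul
    · have hdiv : Tendsto (fun k => (Real.pi : ℂ) / bseq k) atTop
          (𝓝 ((Real.pi : ℂ) / (Complex.I * T))) := tendsto_const_nhds.div hbto hITne
      exact hdiv.cpow tendsto_const_nhds hslit
    · apply tendsto_integral_of_dominated_convergence (fun y => ‖φ y‖)
      · intro k
        apply AEStronglyMeasurable.mul _ hφi.1
        apply Continuous.aestronglyMeasurable
        apply Complex.continuous_exp.comp
        apply Continuous.div_const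
        exact ((Complex.continuous_ofReal.comp ((continuous_const.sub continuous_id).norm)).pow 2).neg
      · exact hφi.norm
      · intro k
        refine ae_of_all _ fun y => ?_
        rw [norm_mul]
        have hexparg : -(‖x - y‖ : ℂ) ^ 2 / (4 * bseq k)
            = ((-(‖x - y‖ ^ 2) : ℝ) : ℂ) * (4 * bseq k)⁻¹ := by
          push_cast; ring
        have h1 : ‖Complex.exp (-(‖x - y‖ : ℂ) ^ 2 / (4 * bseq k))‖ ≤ 1 := by
          rw [Complex.norm_exp, Real.exp_le_one_iff, hexparg,
            Complex.re_ofReal_mul]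
          have h2 : 0 ≤ ((4 : ℂ) * bseq k)⁻¹.re := by
            rw [Complex.inv_re]
            apply div_nonneg _ (Complex.normSq_nonneg _)
            have := (hbre k).le
            simp only [Complex.mul_re]
            norm_num
            linarith
          nlinarith [sq_nonneg ‖x - y‖]
        nlinarith [norm_nonneg (φ y), norm_nonneg (Complex.exp (-(‖x - y‖ : ℂ) ^ 2 / (4 * bseq k)))]
      · refine ae_of_all _ fun y => ?_
        have harg : Tendsto (fun k => -(‖x - y‖ : ℂ) ^ 2 / (4 * bseq k)) atTop
            (𝓝 (-(‖x - y‖ : ℂ) ^ 2 / (4 * (Complex.I * T)))) :=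
          tendsto_const_nhds.div (hbto.const_mul 4)
            (mul_ne_zero (by norm_num) hITne)
        exact (harg.cexp).mul_const (φ y)
  have heq1 := tendsto_nhds_unique hL2 hR1
  -- final algebra
  have hpt : ∀ y : EuclideanSpace ℝ (Fin n),
      Complex.exp (-(‖x - y‖ : ℂ) ^ 2 / (4 * (Complex.I * T))) * φ y
        = Complex.exp (Complex.I * ((‖x‖ ^ 2 / (4 * T) : ℝ) : ℂ)) *
            (Complex.exp (-Complex.I * ((⟪y, (2 * T)⁻¹ • x⟫ : ℝ) : ℂ)) *
              (Complex.exp (Complex.I * ((‖y‖ ^ 2 / (4 * T) : ℝ) : ℂ)) * φ y)) := by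
    intro y
    have hiexp : Complex.exp (-(‖x - y‖ : ℂ) ^ 2 / (4 * (Complex.I * T)))
        = Complex.exp (Complex.I * ((‖x‖ ^ 2 / (4 * T) : ℝ) : ℂ)) *
            (Complex.exp (-Complex.I * ((⟪y, (2 * T)⁻¹ • x⟫ : ℝ) : ℂ)) *
              Complex.exp (Complex.I * ((‖y‖ ^ 2 / (4 * T) : ℝ) : ℂ))) := by
      rw [← Complex.exp_add, ← Complex.exp_add]
      congr 1
      have hxy : ((‖x - y‖ : ℝ) : ℂ) ^ 2
          = ((‖x‖ ^ 2 : ℝ) : ℂ) - 2 * ((⟪x, y⟫ : ℝ) : ℂ) + ((‖y‖ ^ 2 : ℝ) : ℂ) := by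
        rw [show ((‖x - y‖ : ℝ) : ℂ) ^ 2 = ((‖x - y‖ ^ 2 : ℝ) : ℂ) by push_cast; ring,
          norm_sub_sq_real x y]
        push_cast; ring
      have hi : ⟪y, (2 * T)⁻¹ • x⟫ = (2 * T)⁻¹ * ⟪x, y⟫ := by
        rw [real_inner_smul_right, real_inner_comm]
      rw [hxy, hi]
      have hTne : (T : ℂ) ≠ 0 := by exact_mod_cast hT.ne'
      push_cast
      rw [div_eq_iff (by simpa using hITne : (4 : ℂ) * (Complex.I * T) ≠ 0)]
      field_simp
      ring_nf
      rw [Complex.I_sq]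
      ring
    rw [hiexp]
    ring
  have hInt2 : (∫ y : EuclideanSpace ℝ (Fin n),
      Complex.exp (-(‖x - y‖ : ℂ) ^ 2 / (4 * (Complex.I * T))) * φ y)
      = Complex.exp (Complex.I * ((‖x‖ ^ 2 / (4 * T) : ℝ) : ℂ)) *
          ∫ y : EuclideanSpace ℝ (Fin n),
            Complex.exp (-Complex.I * ((⟪y, (2 * T)⁻¹ • x⟫ : ℝ) : ℂ)) *
              (Complex.exp (Complex.I * ((‖y‖ ^ 2 / (4 * T) : ℝ) : ℂ)) * φ y) := by
    rw [← integral_const_mul]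
    exact integral_congr_ae (ae_of_all _ hpt)
  have hFT : fourierTransformPaper n
      (fun y => Complex.exp (Complex.I * ((‖y‖ ^ 2 / (4 * T) : ℝ) : ℂ)) * φ y) ((2 * T)⁻¹ • x)
      = K * ∫ y : EuclideanSpace ℝ (Fin n),
          Complex.exp (-Complex.I * ((⟪y, (2 * T)⁻¹ • x⟫ : ℝ) : ℂ)) *
            (Complex.exp (Complex.I * ((‖y‖ ^ 2 / (4 * T) : ℝ) : ℂ)) * φ y) := rfl
  rw [show schrodingerSol n φ T x = K * ∫ ξ : EuclideanSpace ℝ (Fin n),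
      Complex.exp (Complex.I * ((⟪x, ξ⟫ - T * ‖ξ‖ ^ 2 : ℝ) : ℂ)) * ψ ξ from rfl,
    heq1, hInt2,
    show coefT n T = K * ((Real.pi : ℂ) / (Complex.I * T)) ^ ((n : ℂ) / 2) from rfl,
    hFT]
  ring

lemma norm_coefT {n : ℕ} {T : ℝ} (hT : 0 < T) :
    ‖coefT n T‖ = (2 * T) ^ (-(n : ℝ) / 2) := by
  unfold coefT
  rw [norm_mul]
  have h1 : ‖((((2 * Real.pi) ^ (-(n : ℝ) / 2) : ℝ)) : ℂ)‖ = (2 * Real.pi) ^ (-(n : ℝ) / 2) := by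
    rw [Complex.norm_real, Real.norm_eq_abs, abs_of_pos (by positivity)]
  have habs : ‖((Real.pi : ℂ) / (Complex.I * T))‖ = Real.pi / T := by
    rw [norm_div, Complex.norm_real, norm_mul, Complex.norm_I, Complex.norm_real,
      Real.norm_eq_abs, Real.norm_eq_abs, abs_of_pos Real.pi_pos, abs_of_pos hT, one_mul]
  have h2 : ‖((Real.pi : ℂ) / (Complex.I * T)) ^ ((n : ℂ) / 2)‖ = (Real.pi / T) ^ ((n : ℝ) / 2) := by
    rw [show ((n : ℂ) / 2) = (((n : ℝ) / 2 : ℝ) : ℂ) by push_cast; ring,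
      Complex.norm_cpow_real, habs]
  have e1 : (2 * Real.pi) ^ (-(n : ℝ) / 2) = ((2 * Real.pi)⁻¹) ^ ((n : ℝ) / 2) := by
    rw [neg_div, Real.rpow_neg (by positivity), ← Real.inv_rpow (by positivity)]
  have e2 : (2 * T) ^ (-(n : ℝ) / 2) = ((2 * T)⁻¹) ^ ((n : ℝ) / 2) := by
    rw [neg_div, Real.rpow_neg (by positivity), ← Real.inv_rpow (by positivity)]
  rw [h1, h2, e1, e2, ← Real.mul_rpow (by positivity) (by positivity)]
  congr 1
  field_simp

lemma coefT_ne_zero {n : ℕ} {T : ℝ} (hT : 0 < T) : coefT n T ≠ 0 := by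
  intro h
  have := norm_coefT (n := n) hT
  rw [h, norm_zero] at this
  have h2 : (0 : ℝ) < (2 * T) ^ (-(n : ℝ) / 2) := Real.rpow_pos_of_pos (by linarith) _
  rw [← this] at h2
  exact lt_irrefl 0 h2

lemma lintegral_comp_smul {n : ℕ} (G : EuclideanSpace ℝ (Fin n) → ℝ≥0∞) {s : ℝ} (hs : s ≠ 0) :
    ∫⁻ x, G (s • x) = ENNReal.ofReal |(s ^ n)⁻¹| * ∫⁻ x, G x := by
  set e := (Homeomorph.smul (Units.mk0 s hs)
    (α := EuclideanSpace ℝ (Fin n))).toMeasurableEquiv with he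
  have hcoe : ⇑e = fun x : EuclideanSpace ℝ (Fin n) => s • x := rfl
  have hmap : Measure.map (⇑e) volume
      = ENNReal.ofReal |(s ^ n)⁻¹| • volume := by
    rw [hcoe]
    have := Measure.map_addHaar_smul (μ := (volume : Measure (EuclideanSpace ℝ (Fin n)))) hs
    rwa [finrank_euclideanSpace_fin] at this
  calc ∫⁻ x, G (s • x) = ∫⁻ x, G (e x) := by rw [hcoe]
    _ = ∫⁻ y, G y ∂(Measure.map (⇑e) volume) := (MeasureTheory.lintegral_map_equiv G e).symm
    _ = ENNReal.ofReal |(s ^ n)⁻¹| * ∫⁻ x, G x := by rw [hmap, lintegral_smul_measure, smul_eq_mul]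

lemma eLpNorm_comp_smul {n : ℕ} (F : EuclideanSpace ℝ (Fin n) → ℂ) {s : ℝ} (hs : s ≠ 0) :
    eLpNorm (fun x => F (s • x)) 2 volume
      = (ENNReal.ofReal |(s ^ n)⁻¹|) ^ ((2 : ℝ)⁻¹) * eLpNorm F 2 volume := by
  rw [eLpNorm_eq_lintegral_rpow_enorm_toReal (by norm_num) (by norm_num),
    eLpNorm_eq_lintegral_rpow_enorm_toReal (by norm_num) (by norm_num)]
  rw [show ∫⁻ x, ‖F (s • x)‖ₑ ^ (2 : ℝ≥0∞).toReal
      = ENNReal.ofReal |(s ^ n)⁻¹| * ∫⁻ x, ‖F x‖ₑ ^ (2 : ℝ≥0∞).toReal from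
    lintegral_comp_smul (fun y => ‖F y‖ₑ ^ (2 : ℝ≥0∞).toReal) hs]
  rw [ENNReal.mul_rpow_of_nonneg _ _ (by norm_num)]
  norm_num

lemma norm_unimod (r : ℝ) : ‖Complex.exp (Complex.I * (r : ℂ))‖ = 1 := by
  rw [Complex.norm_exp]
  simp

lemma memLp_unimod {n : ℕ} {θ : EuclideanSpace ℝ (Fin n) → ℝ} (hθ : Continuous θ)
    {F : EuclideanSpace ℝ (Fin n) → ℂ} (hF : MemLp F 2 (volume : Measure _)) :
    MemLp (fun x => Complex.exp (Complex.I * ((θ x : ℝ) : ℂ)) * F x) 2 volume := by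
  constructor
  · exact (Continuous.aestronglyMeasurable (Complex.continuous_exp.comp
      (continuous_const.mul (Complex.continuous_ofReal.comp hθ)))).mul hF.1
  · have heq : eLpNorm (fun x => Complex.exp (Complex.I * ((θ x : ℝ) : ℂ)) * F x) 2 volume
        = eLpNorm F 2 volume := by
      apply eLpNorm_congr_norm_ae (ae_of_all _ fun x => ?_)
      rw [norm_mul, norm_unimod, one_mul]
    rw [heq]
    exact hF.2
lemma memLp_comp_smul {n : ℕ} {F : EuclideanSpace ℝ (Fin n) → ℂ}
    (hF : MemLp F 2 (volume : Measure (EuclideanSpace ℝ (Fin n)))) {s : ℝ} (hs : s ≠ 0) :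
    MemLp (fun x => F (s • x)) 2 volume := by
  constructor
  · exact hF.1.comp_quasiMeasurePreserving (Measure.quasiMeasurePreserving_smul volume hs)
  · rw [eLpNorm_comp_smul F hs]
    exact ENNReal.mul_lt_top
      (ENNReal.rpow_lt_top_of_nonneg (by norm_num) ENNReal.ofReal_ne_top) hF.2

lemma smooth_unimod_norm_sq {n : ℕ} (c : ℝ) :
    ContDiff ℝ (⊤ : ℕ∞) (fun y : EuclideanSpace ℝ (Fin n) =>
      Complex.exp (Complex.I * ((c * ‖y‖ ^ 2 : ℝ) : ℂ))) := by
  apply Complex.contDiff_exp.comp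
  apply ContDiff.mul contDiff_const
  exact Complex.ofRealCLM.contDiff.comp (contDiff_const.mul (contDiff_norm_sq ℝ))

lemma obs_of_unc {n : ℕ} {A B : Set (EuclideanSpace ℝ (Fin n))} {C : ℝ}
    (h : UncertaintyIneq n A B C) : ObservabilityIneq n A B C := by
  intro T hT u₀ v hsol
  obtain ⟨hu₀, hv, φs, hts, hc1, hc2⟩ := hsol
  have hs0 : (2 * T) ≠ 0 := by positivity
  have h4T : (0:ℝ) < 4 * T := by linarith
  -- modulated data and transformed solution
  set h0 : EuclideanSpace ℝ (Fin n) → ℂ :=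
    fun y => Complex.exp (Complex.I * ((‖y‖ ^ 2 / (4 * T) : ℝ) : ℂ)) * u₀ y with hh0
  set g : EuclideanSpace ℝ (Fin n) → ℂ :=
    fun ξ => (coefT n T)⁻¹ * (Complex.exp (Complex.I * ((-(T * ‖ξ‖ ^ 2) : ℝ) : ℂ)) *
      v ((2 * T) • ξ)) with hgdef
  -- key pointwise identity for the approximants
  have hkey : ∀ k (ξ : EuclideanSpace ℝ (Fin n)),
      fourierTransformPaper n
        (fun y => Complex.exp (Complex.I * ((‖y‖ ^ 2 / (4 * T) : ℝ) : ℂ)) * φs k y) ξ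
        = (coefT n T)⁻¹ * (Complex.exp (Complex.I * ((-(T * ‖ξ‖ ^ 2) : ℝ) : ℂ)) *
            schrodingerSol n (φs k) T ((2 * T) • ξ)) := by
    intro k ξ
    have hid := key_identity hT (hts k) ((2 * T) • ξ)
    have hsmul : (2 * T)⁻¹ • ((2 * T) • ξ) = ξ := by
      rw [smul_smul, inv_mul_cancel₀ hs0, one_smul]
    have hnsq : ‖(2 * T) • ξ‖ ^ 2 / (4 * T) = T * ‖ξ‖ ^ 2 := by
      rw [norm_smul, Real.norm_eq_abs, abs_of_pos (by linarith : (0:ℝ) < 2 * T)]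
      field_simp
      ring
    rw [hsmul, hnsq] at hid
    have hexp : Complex.exp (Complex.I * ((-(T * ‖ξ‖ ^ 2) : ℝ) : ℂ)) *
        Complex.exp (Complex.I * ((T * ‖ξ‖ ^ 2 : ℝ) : ℂ)) = 1 := by
      rw [← Complex.exp_add, ← Complex.exp_zero]
      congr 1
      push_cast
      ring
    rw [hid]
    generalize fourierTransformPaper n
      (fun y => Complex.exp (Complex.I * ((‖y‖ ^ 2 / (4 * T) : ℝ) : ℂ)) * φs k y) ξ = P
    rw [show (coefT n T)⁻¹ * (Complex.exp (Complex.I * ((-(T * ‖ξ‖ ^ 2) : ℝ) : ℂ)) *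
          (coefT n T * Complex.exp (Complex.I * ((T * ‖ξ‖ ^ 2 : ℝ) : ℂ)) * P))
        = ((coefT n T)⁻¹ * coefT n T) *
            ((Complex.exp (Complex.I * ((-(T * ‖ξ‖ ^ 2) : ℝ) : ℂ)) *
              Complex.exp (Complex.I * ((T * ‖ξ‖ ^ 2 : ℝ) : ℂ))) * P) from by ring,
      inv_mul_cancel₀ (coefT_ne_zero hT), hexp, one_mul, one_mul]
  -- continuity facts
  have hθ4 : Continuous fun y : EuclideanSpace ℝ (Fin n) => ‖y‖ ^ 2 / (4 * T) :=
    (continuous_norm.pow 2).div_const _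
  have hθT : Continuous fun ξ : EuclideanSpace ℝ (Fin n) => -(T * ‖ξ‖ ^ 2) :=
    (continuous_const.mul (continuous_norm.pow 2)).neg
  -- the L² Fourier pair
  have hpair : IsL2FourierPair n h0 g := by
    refine ⟨memLp_unimod hθ4 hu₀,
      ((memLp_unimod hθT (memLp_comp_smul hv hs0))).const_mul _,
      fun k y => Complex.exp (Complex.I * ((‖y‖ ^ 2 / (4 * T) : ℝ) : ℂ)) * φs k y,
      fun k => ?_, ?_, ?_⟩
    · constructor
      · have hsm := smooth_unimod_norm_sq (n := n) ((4 * T)⁻¹)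
        rw [show (fun y : EuclideanSpace ℝ (Fin n) =>
            Complex.exp (Complex.I * (((4 * T)⁻¹ * ‖y‖ ^ 2 : ℝ) : ℂ)))
            = (fun y : EuclideanSpace ℝ (Fin n) =>
              Complex.exp (Complex.I * ((‖y‖ ^ 2 / (4 * T) : ℝ) : ℂ))) from
          funext fun y => by rw [inv_mul_eq_div]] at hsm
        exact hsm.mul (hts k).1
      · exact ((hts k).2).mul_left
    · refine hc1.congr fun k => ?_
      refine (eLpNorm_congr_norm_ae (ae_of_all _ fun x => ?_)).symm
      rw [hh0, ← mul_sub, norm_mul, norm_unimod, one_mul]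
    · have heq : ∀ k, eLpNorm (fun ξ => g ξ - fourierTransformPaper n
          (fun y => Complex.exp (Complex.I * ((‖y‖ ^ 2 / (4 * T) : ℝ) : ℂ)) * φs k y) ξ) 2 volume
          = (‖(coefT n T)⁻¹‖₊ : ℝ≥0∞) * ((ENNReal.ofReal |(((2 * T)) ^ n)⁻¹|) ^ ((2 : ℝ)⁻¹) *
              eLpNorm (fun x => v x - schrodingerSol n (φs k) T x) 2 volume) := by
        intro k
        have e1 : eLpNorm (fun ξ => g ξ - fourierTransformPaper n
            (fun y => Complex.exp (Complex.I * ((‖y‖ ^ 2 / (4 * T) : ℝ) : ℂ)) * φs k y) ξ) 2 volume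
            = eLpNorm ((coefT n T)⁻¹ • fun ξ =>
                ((fun z => v z - schrodingerSol n (φs k) T z) ((2 * T) • ξ))) 2 volume := by
          apply eLpNorm_congr_norm_ae (ae_of_all _ fun ξ => ?_)
          rw [hkey k ξ, hgdef]
          rw [← mul_sub, ← mul_sub, norm_mul, norm_mul, norm_unimod, one_mul]
          rw [show ((coefT n T)⁻¹ • fun ξ : EuclideanSpace ℝ (Fin n) =>
              v ((2 * T) • ξ) - schrodingerSol n (φs k) T ((2 * T) • ξ)) ξ
              = (coefT n T)⁻¹ * (v ((2 * T) • ξ) - schrodingerSol n (φs k) T ((2 * T) • ξ))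
            from rfl, norm_mul]
        rw [e1, eLpNorm_const_smul,
          eLpNorm_comp_smul (fun z => v z - schrodingerSol n (φs k) T z) hs0, enorm_eq_nnnorm]
      simp_rw [heq]
      have hfin2 : ((ENNReal.ofReal |(((2 * T)) ^ n)⁻¹|) ^ ((2 : ℝ)⁻¹)) ≠ ∞ :=
        (ENNReal.rpow_lt_top_of_nonneg (by norm_num) ENNReal.ofReal_ne_top).ne
      have t1 : Tendsto (fun k => (ENNReal.ofReal |(((2 * T)) ^ n)⁻¹|) ^ ((2 : ℝ)⁻¹) *
          eLpNorm (fun x => v x - schrodingerSol n (φs k) T x) 2 volume) atTop (𝓝 0) := by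
        have := ENNReal.Tendsto.const_mul hc2 (Or.inr hfin2)
        simpa using this
      have t2 := ENNReal.Tendsto.const_mul (a := ((‖(coefT n T)⁻¹‖₊ : ℝ≥0∞))) t1 (Or.inr ENNReal.coe_ne_top)
      simpa using t2
  have hineq := h h0 g hpair
  -- convert integrals
  have hnh0 : ∀ x, ‖h0 x‖ = ‖u₀ x‖ := fun x => by
    rw [hh0, norm_mul, norm_unimod, one_mul]
  have c1 : (∫ x, ‖h0 x‖ ^ 2) = ∫ x, ‖u₀ x‖ ^ 2 :=
    integral_congr_ae (ae_of_all _ fun x => by simp only [hnh0])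
  have c2 : (∫ x in A, ‖h0 x‖ ^ 2) = ∫ x in A, ‖u₀ x‖ ^ 2 :=
    integral_congr_ae (ae_of_all _ fun x => by simp only [hnh0])
  have hpow : ((((2 * T)) ^ (-(n : ℝ) / 2))⁻¹) ^ 2 = ((2 * T)) ^ (n : ℕ) := by
    rw [neg_div, Real.rpow_neg (by positivity), inv_inv,
      ← Real.rpow_natCast ((2 * T) ^ ((n : ℝ) / 2)) 2, ← Real.rpow_mul (by positivity)]
    rw [show ((n : ℝ) / 2) * ((2 : ℕ) : ℝ) = (n : ℝ) by push_cast; ring,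
      Real.rpow_natCast]
  have hng : ∀ ξ, ‖g ξ‖ ^ 2 = ((2 * T)) ^ (n : ℕ) * ‖v ((2 * T) • ξ)‖ ^ 2 := fun ξ => by
    rw [hgdef, norm_mul, norm_mul, norm_unimod, one_mul, norm_inv, norm_coefT hT,
      mul_pow, mul_pow, hpow]
    ring
  have c3 : (∫ ξ in B, ‖g ξ‖ ^ 2) = ∫ x in (fun y => (2 * T) • y) '' B, ‖v x‖ ^ 2 := by
    rw [integral_congr_ae (ae_of_all _ fun ξ => hng ξ), integral_const_mul,
      Measure.setIntegral_comp_smul_of_pos volume (fun x => ‖v x‖ ^ 2) B (by positivity : (0:ℝ) < 2 * T),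
      finrank_euclideanSpace_fin, smul_eq_mul, ← mul_assoc,
      mul_inv_cancel₀ (by positivity : ((2 * T) : ℝ) ^ n ≠ 0), one_mul, Set.image_smul]
  rw [c1, c2, c3] at hineq
  exact hineq

lemma unc_of_obs {n : ℕ} {A B : Set (EuclideanSpace ℝ (Fin n))} {C : ℝ}
    (h : ObservabilityIneq n A B C) : UncertaintyIneq n A B C := by
  intro f g hpair
  obtain ⟨hf, hg, φs, hts, hc1, hc2⟩ := hpair
  have hT : (0 : ℝ) < 1 / 2 := by norm_num
  have hcoef1 : ‖coefT n (1 /2 : ℝ)‖ = 1 := by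
    rw [norm_coefT hT, show (2 * (1 / 2 : ℝ)) = 1 by norm_num, Real.one_rpow]
  set u₀ : EuclideanSpace ℝ (Fin n) → ℂ :=
    fun x => Complex.exp (Complex.I * ((-(‖x‖ ^ 2 / 2) : ℝ) : ℂ)) * f x with hu₀def
  set v : EuclideanSpace ℝ (Fin n) → ℂ :=
    fun x => coefT n (1 / 2 : ℝ) *
      (Complex.exp (Complex.I * ((‖x‖ ^ 2 / 2 : ℝ) : ℂ)) * g x) with hvdef
  set ψs : ℕ → EuclideanSpace ℝ (Fin n) → ℂ :=
    fun k x => Complex.exp (Complex.I * ((-(‖x‖ ^ 2 / 2) : ℝ) : ℂ)) * φs k x with hψdef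
  have hθ : Continuous fun x : EuclideanSpace ℝ (Fin n) => -(‖x‖ ^ 2 / 2) :=
    ((continuous_norm.pow 2).div_const 2).neg
  have hθ' : Continuous fun x : EuclideanSpace ℝ (Fin n) => ‖x‖ ^ 2 / 2 :=
    (continuous_norm.pow 2).div_const 2
  have htests : ∀ k, IsTestFun n (ψs k) := by
    intro k
    constructor
    · have hsm := smooth_unimod_norm_sq (n := n) (-(1 / 2 : ℝ))
      rw [show (fun y : EuclideanSpace ℝ (Fin n) =>
          Complex.exp (Complex.I * ((-(1 / 2 : ℝ) * ‖y‖ ^ 2 : ℝ) : ℂ)))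
          = (fun y : EuclideanSpace ℝ (Fin n) =>
            Complex.exp (Complex.I * ((-(‖y‖ ^ 2 / 2) : ℝ) : ℂ))) from
        funext fun y => by norm_num; ring_nf] at hsm
      exact hsm.mul (hts k).1
    · exact ((hts k).2).mul_left
  -- identity for solutions of the approximants
  have hkey : ∀ k (x : EuclideanSpace ℝ (Fin n)),
      schrodingerSol n (ψs k) (1 / 2 : ℝ) x
        = coefT n (1 / 2 : ℝ) * (Complex.exp (Complex.I * ((‖x‖ ^ 2 / 2 : ℝ) : ℂ)) *
            fourierTransformPaper n (φs k) x) := by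
    intro k x
    have hid := key_identity hT (htests k) x
    rw [show (4 * (1 / 2 : ℝ)) = 2 by norm_num,
      show (2 * (1 / 2 : ℝ)) = 1 by norm_num, inv_one, one_smul] at hid
    have hmod : (fun y : EuclideanSpace ℝ (Fin n) =>
        Complex.exp (Complex.I * ((‖y‖ ^ 2 / 2 : ℝ) : ℂ)) * ψs k y) = φs k := by
      funext y
      rw [hψdef]
      rw [← mul_assoc, ← Complex.exp_add,
        show Complex.I * ((‖y‖ ^ 2 / 2 : ℝ) : ℂ) + Complex.I * ((-(‖y‖ ^ 2 / 2) : ℝ) : ℂ)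
          = 0 by push_cast; ring, Complex.exp_zero, one_mul]
    rw [hmod] at hid
    rw [hid]
    ring
  -- the Schrödinger-solution structure
  have hsol : IsFreeSchrodingerSol n u₀ (1 / 2 : ℝ) v := by
    refine ⟨memLp_unimod hθ hf, (memLp_unimod hθ' hg).const_mul _, ψs, htests, ?_, ?_⟩
    · refine hc1.congr fun k => ?_
      refine (eLpNorm_congr_norm_ae (ae_of_all _ fun x => ?_)).symm
      rw [hu₀def, hψdef, ← mul_sub, norm_mul, norm_unimod, one_mul]
    · refine hc2.congr fun k => ?_
      refine (eLpNorm_congr_norm_ae (ae_of_all _ fun x => ?_)).symm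
      rw [hkey k x, hvdef, ← mul_sub, ← mul_sub, norm_mul, norm_mul, hcoef1, one_mul,
        norm_unimod, one_mul]
  have hineq := h (1 / 2 : ℝ) hT u₀ v hsol
  have hnu : ∀ x, ‖u₀ x‖ = ‖f x‖ := fun x => by
    rw [hu₀def, norm_mul, norm_unimod, one_mul]
  have hnv : ∀ x, ‖v x‖ = ‖g x‖ := fun x => by
    rw [hvdef, norm_mul, norm_mul, hcoef1, one_mul, norm_unimod, one_mul]
  have c1 : (∫ x, ‖u₀ x‖ ^ 2) = ∫ x, ‖f x‖ ^ 2 :=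
    integral_congr_ae (ae_of_all _ fun x => by simp only [hnu])
  have c2 : (∫ x in A, ‖u₀ x‖ ^ 2) = ∫ x in A, ‖f x‖ ^ 2 :=
    integral_congr_ae (ae_of_all _ fun x => by simp only [hnu])
  have himg : (fun y : EuclideanSpace ℝ (Fin n) => (2 * (1 / 2 : ℝ)) • y) '' B = B := by
    rw [show (2 * (1 / 2 : ℝ)) = 1 by norm_num]
    simp [one_smul]
  have c3 : (∫ x in (fun y : EuclideanSpace ℝ (Fin n) => (2 * (1 / 2 : ℝ)) • y) '' B, ‖v x‖ ^ 2)
      = ∫ ξ in B, ‖g ξ‖ ^ 2 := by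
    rw [himg]
    exact integral_congr_ae (ae_of_all _ fun x => by simp only [hnv])
  rw [c1, c2, c3] at hineq
  exact hineq

/-- Lemma 2.2: for measurable `A, B ⊂ ℝⁿ`, the uncertainty principle on `(A,B)` holds (for some
constant) iff the observability inequality at one time point holds (for some constant); moreover
the two constants can be chosen to be the same. -/
theorem uncertainty_iff_observability (n : ℕ) (hn : 1 ≤ n)
    (A B : Set (EuclideanSpace ℝ (Fin n))) (hA : MeasurableSet A) (hB : MeasurableSet B) :
    ((∃ C > (0 : ℝ), UncertaintyIneq n A B C) ↔ (∃ C > (0 : ℝ), ObservabilityIneq n A B C)) ∧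
      (∀ C > (0 : ℝ), (UncertaintyIneq n A B C ↔ ObservabilityIneq n A B C)) := by
  constructor
  · constructor
    · rintro ⟨C, hC, hU⟩
      exact ⟨C, hC, obs_of_unc hU⟩
    · rintro ⟨C, hC, hO⟩
      exact ⟨C, hC, unc_of_obs hO⟩
  · intro C _hC
    exact ⟨fun hU => obs_of_unc hU, fun hO => unc_of_obs hO⟩
end

section
/- There exists an absolute constant C > 0 (independent of n) such that for every n ∈ ℕ with n ≥ 1, every a > 0, and every multi-index β ∈ ℕⁿ: ( ∫_{ℝⁿ} |ξ^{2β}| e^{−a|ξ|} dξ )^{1/2} ≤ (2n/a)^{n/2} · β! · (Cn/a)^{|β|}, where ξ^{2β} = ∏_{i=1}^n ξᵢ^{2βᵢ}, β! = ∏_{i=1}^n βᵢ!, and |β| = Σ_{i=1}^n βᵢ. -/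
open MeasureTheory
open scoped Real BigOperators
open Finset Real
open scoped Nat

/-! Since `∑ |ξᵢ| ≤ √n ‖ξ‖`, the weight `e^{-a‖ξ‖}` is dominated by `∏ e^{-(a/√n)|ξᵢ|}`, so the
integral is at most a product of one-dimensional Gamma integrals `2 (2βᵢ)! / (a/√n)^{2βᵢ+1}`.
The bound `(2k)! ≤ 4^k (k!)²` together with `√n ≤ n` then gives the estimate with `C = 2`. -/

theorem Nat.factorial_two_mul_le_four_pow_mul_sq (k : ℕ) : (2 * k)! ≤ 4 ^ k * k ! ^ 2 := by
  have h := Nat.choose_mul_factorial_mul_factorial (show k ≤ 2 * k by omega)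
  rw [show 2 * k - k = k by omega, ← Nat.centralBinom_eq_two_mul_choose] at h
  rw [← h, mul_assoc, ← sq]
  exact Nat.mul_le_mul_right _ (Nat.centralBinom_le_four_pow k)

theorem integral_abs_pow_mul_exp_neg_mul_abs {b : ℝ} (hb : 0 < b) (m : ℕ) :
    ∫ t : ℝ, |t| ^ m * exp (-b * |t|) = 2 * (m ! / b ^ (m + 1)) := by
  have h := integral_rpow_mul_exp_neg_mul_Ioi (a := m + 1) (by positivity) hb
  rw [add_sub_cancel_right, Gamma_nat_eq_factorial, ← Nat.cast_succ, Real.rpow_natCast,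
    one_div_pow, one_div_mul_eq_div] at h
  rw [integral_comp_abs (f := fun s => s ^ m * exp (-b * s)), ← h]
  congr 1
  refine setIntegral_congr_fun measurableSet_Ioi fun t _ => ?_
  rw [Real.rpow_natCast, neg_mul]

theorem integrable_abs_pow_mul_exp_neg_mul_abs {b : ℝ} (hb : 0 < b) (m : ℕ) :
    Integrable fun t : ℝ => |t| ^ m * exp (-b * |t|) :=
  Integrable.of_integral_ne_zero <| by
    rw [integral_abs_pow_mul_exp_neg_mul_abs hb]; positivity

section EuclideanSpace

variable {ι : Type*} [Fintype ι]

theorem EuclideanSpace.sum_abs_le_sqrt_card_mul_norm (ξ : EuclideanSpace ℝ ι) :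
    ∑ i, |ξ i| ≤ √(Fintype.card ι) * ‖ξ‖ := by
  rw [EuclideanSpace.norm_eq, ← Real.sqrt_mul (Nat.cast_nonneg _)]
  refine le_trans (le_abs_self _) (Real.abs_le_sqrt ?_)
  simpa [Real.norm_eq_abs, sq_abs] using sq_sum_le_card_mul_sum_sq (s := univ) (f := fun i => |ξ i|)

theorem EuclideanSpace.exp_neg_mul_norm_le_prod [Nonempty ι] {a : ℝ} (ha : 0 ≤ a)
    (ξ : EuclideanSpace ℝ ι) :
    exp (-a * ‖ξ‖) ≤ ∏ i, exp (-(a / √(Fintype.card ι)) * |ξ i|) := by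
  rw [← exp_sum, exp_le_exp, ← Finset.mul_sum, neg_mul, neg_mul, neg_le_neg_iff,
    div_mul_eq_mul_div, div_le_iff₀ (by positivity), mul_assoc, mul_comm ‖ξ‖]
  exact mul_le_mul_of_nonneg_left (sum_abs_le_sqrt_card_mul_norm ξ) ha

theorem EuclideanSpace.integral_prod_apply (f : ι → ℝ → ℝ) :
    ∫ ξ : EuclideanSpace ℝ ι, ∏ i, f i (ξ i) = ∏ i, ∫ t, f i t := by
  rw [← integral_fintype_prod_volume_eq_prod]
  exact (volume_preserving_symm_measurableEquiv_toLp ι).integral_comp' (fun x => ∏ i, f i (x i))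

theorem EuclideanSpace.integrable_prod_apply {f : ι → ℝ → ℝ} (hf : ∀ i, Integrable (f i)) :
    Integrable fun ξ : EuclideanSpace ℝ ι => ∏ i, f i (ξ i) :=
  ((volume_preserving_symm_measurableEquiv_toLp ι).integrable_comp_emb
    (MeasurableEquiv.toLp 2 (ι → ℝ)).symm.measurableEmbedding).mpr (Integrable.fintype_prod hf)

theorem EuclideanSpace.integral_abs_prod_pow_mul_exp_neg_mul_norm_le [Nonempty ι] (k : ι → ℕ)
    {a : ℝ} (ha : 0 < a) :
    ∫ ξ : EuclideanSpace ℝ ι, |∏ i, ξ i ^ k i| * exp (-a * ‖ξ‖) ≤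
      ∏ i, 2 * ((k i)! / (a / √(Fintype.card ι)) ^ (k i + 1)) := by
  set b := a / √(Fintype.card ι)
  have hb : 0 < b := by positivity
  simp_rw [← integral_abs_pow_mul_exp_neg_mul_abs hb, ← integral_prod_apply]
  refine integral_mono_of_nonneg (ae_of_all _ fun ξ => by positivity)
    (integrable_prod_apply fun i => integrable_abs_pow_mul_exp_neg_mul_abs hb (k i))
    (ae_of_all _ fun ξ => ?_)
  calc |∏ i, ξ i ^ k i| * exp (-a * ‖ξ‖) ≤ (∏ i, |ξ i| ^ k i) * ∏ i, exp (-b * |ξ i|) := by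
        simp_rw [abs_prod, abs_pow]
        gcongr
        exact exp_neg_mul_norm_le_prod ha.le ξ
    _ = ∏ i, |ξ i| ^ k i * exp (-b * |ξ i|) := prod_mul_distrib.symm

end EuclideanSpace

theorem two_mul_factorial_two_mul_div_pow_le {b X : ℝ} (hb : 0 < b) (hbX : 2 ≤ b * X) (k : ℕ) :
    2 * ((2 * k)! / b ^ (2 * k + 1)) ≤ (√X * k ! * X ^ k) ^ 2 := by
  have hX : 0 ≤ X := by nlinarith
  calc 2 * ((2 * k)! / b ^ (2 * k + 1)) ≤ 2 * (4 ^ k * k ! ^ 2 / b ^ (2 * k + 1)) := by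
        gcongr; exact_mod_cast Nat.factorial_two_mul_le_four_pow_mul_sq k
    _ = (2 / b) ^ (2 * k + 1) * k ! ^ 2 := by
        rw [div_pow, show (2 : ℝ) ^ (2 * k + 1) = 4 ^ k * 2 by rw [pow_succ, pow_mul]; norm_num]
        ring
    _ ≤ X ^ (2 * k + 1) * k ! ^ 2 := by
        gcongr; rwa [div_le_iff₀ hb, mul_comm]
    _ = (√X * k ! * X ^ k) ^ 2 := by
        rw [mul_pow, mul_pow, sq_sqrt hX, ← pow_mul]; ring

/-- Lemma 2.1: there is an absolute constant `C > 0` (independent of `n`) such that for each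
`n ≥ 1`, `a > 0` and multi-index `β ∈ ℕⁿ`,
`(∫ |ξ^{2β}| e^{-a|ξ|} dξ)^{1/2} ≤ (2n/a)^{n/2} β! (Cn/a)^{|β|}`. -/
theorem euler_integral_estimate :
    ∃ C > (0 : ℝ),
      ∀ n : ℕ, 1 ≤ n → ∀ a : ℝ, 0 < a → ∀ β : Fin n → ℕ,
        (∫ ξ : EuclideanSpace ℝ (Fin n),
            |∏ i, ξ i ^ (2 * β i)| * Real.exp (-a * ‖ξ‖)) ^ ((1 : ℝ) / 2) ≤
          (2 * n / a) ^ ((n : ℝ) / 2) * ((∏ i, Nat.factorial (β i) : ℕ) : ℝ) *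
            (C * n / a) ^ (∑ i, β i) := by
  refine ⟨2, two_pos, fun n hn a ha β => ?_⟩
  have : Nonempty (Fin n) := ⟨⟨0, hn⟩⟩
  have hbX : 2 ≤ a / √n * (2 * n / a) := by
    have hn' : (1 : ℝ) ≤ n := by exact_mod_cast hn
    rw [show a / √n * (2 * n / a) = 2 * √n by field_simp; rw [sq_sqrt (by positivity)]]
    nlinarith [one_le_sqrt.mpr hn']
  set X : ℝ := 2 * n / a
  have hX : 0 ≤ X := by positivity
  calc _ ≤ (∏ i, 2 * ((2 * β i)! / (a / √n) ^ (2 * β i + 1) : ℝ)) ^ (1 / 2 : ℝ) := by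
        gcongr
        simpa using EuclideanSpace.integral_abs_prod_pow_mul_exp_neg_mul_norm_le (2 * β ·) ha
    _ ≤ (∏ i, (√X * (β i)! * X ^ β i) ^ 2) ^ (1 / 2 : ℝ) := by
        gcongr with i
        exact two_mul_factorial_two_mul_div_pow_le (by positivity) hbX (β i)
    _ = ∏ i, √X * (β i)! * X ^ β i := by
        rw [Finset.prod_pow, ← sqrt_eq_rpow, sqrt_sq (by positivity)]
    _ = _ := by
        rw [prod_mul_distrib, prod_mul_distrib, prod_const, prod_pow_eq_pow_sum, card_univ,
          Fintype.card_fin, sqrt_eq_rpow, ← rpow_mul_natCast hX, Nat.cast_prod]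
        ring_nf
end

section
/- Let x ∈ (0,1) and θ ∈ (0,1). Then for each a > 0: Σ_{k=1}^∞ x^{θ^k} e^{−ak} ≤ (e^a / |ln θ|) · Γ( a/|ln θ| ) · |ln x|^{−a/|ln θ|}, where Γ denotes the Gamma function Γ(s) = ∫_0^∞ t^{s−1} e^{−t} dt. -/
/-!
Put `L = |ln x|`, `c = a / |ln θ|` and `u_k = L θ^k`. Then the `k`-th term is
`L^(-c) e^(-u_k) u_k^c`, and since `e^(-t) ≥ e^(-u_k)` on `[u_{k+1}, u_k]`,
`e^(-u_k) (u_k^c - u_{k+1}^c) / c ≤ ∫_{u_{k+1}}^{u_k} e^(-t) t^(c-1) dt`.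
As `u_{k+1}^c = θ^c u_k^c = e^(-a) u_k^c` and these intervals are disjoint subsets of `(0, ∞)`,
the series is at most `L^(-c) c Γ(c) / (1 - e^(-a))`; finally `a / (1 - e^(-a)) ≤ e^a`.
-/

open Real MeasureTheory Set intervalIntegral

lemma intervalIntegrable_exp_neg_mul_rpow {c p q : ℝ} (hp : 0 < p) (hq : 0 < q) :
    IntervalIntegrable (fun t => exp (-t) * t ^ (c - 1)) volume p q := by
  refine ContinuousOn.intervalIntegrable fun t ht => ?_
  have ht0 : 0 < t := (lt_min hp hq).trans_le ht.1
  exact ((continuous_exp.comp continuous_neg).continuousAt.mul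
    (continuousAt_rpow_const t (c - 1) (Or.inl ht0.ne'))).continuousWithinAt

lemma exp_neg_mul_rpow_sub_div_le_integral {c p q : ℝ} (hc : 0 < c) (hq : 0 < q) (hqp : q ≤ p) :
    exp (-p) * ((p ^ c - q ^ c) / c) ≤ ∫ t in q..p, exp (-t) * t ^ (c - 1) := by
  calc exp (-p) * ((p ^ c - q ^ c) / c) = ∫ t in q..p, exp (-p) * t ^ (c - 1) := by
        rw [intervalIntegral.integral_const_mul, integral_rpow (Or.inl (by linarith)),
          sub_add_cancel]
    _ ≤ ∫ t in q..p, exp (-t) * t ^ (c - 1) := by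
        refine integral_mono_on hqp
          ((intervalIntegral.intervalIntegrable_rpow' (by linarith)).const_mul _)
          (intervalIntegrable_exp_neg_mul_rpow hq (hq.trans_le hqp)) fun t ht => ?_
        gcongr
        · exact rpow_nonneg (hq.le.trans ht.1) _
        · exact ht.2

lemma sum_integral_exp_neg_mul_rpow_le_Gamma {u : ℕ → ℝ} (hu : Antitone u)
    (hpos : ∀ k, 0 < u k) {c : ℝ} (hc : 0 < c) (N : ℕ) :
    ∑ k ∈ Finset.range N, ∫ t in u (k + 1)..u k, exp (-t) * t ^ (c - 1) ≤ Gamma c := by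
  have htelescope : ∑ k ∈ Finset.range N, ∫ t in u (k + 1)..u k, exp (-t) * t ^ (c - 1) =
      ∫ t in u N..u 0, exp (-t) * t ^ (c - 1) := by
    rw [integral_symm, ← sum_integral_adjacent_intervals fun k _ =>
      intervalIntegrable_exp_neg_mul_rpow (hpos k) (hpos (k + 1)), ← Finset.sum_neg_distrib]
    exact Finset.sum_congr rfl fun k _ => integral_symm _ _
  rw [htelescope, integral_of_le (hu N.zero_le), Gamma_eq_integral hc]
  refine setIntegral_mono_set (GammaIntegral_convergent hc) ?_
    (Filter.Eventually.of_forall fun t ht => (hpos N).trans ht.1)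
  filter_upwards [ae_restrict_mem measurableSet_Ioi] with t ht
  exact mul_nonneg (exp_pos _).le (rpow_nonneg (le_of_lt ht) _)

lemma tsum_exp_neg_mul_rpow_geometric_le {L θ c : ℝ} (hL : 0 < L) (hθ0 : 0 < θ) (hθ1 : θ < 1)
    (hc : 0 < c) :
    ∑' k : ℕ, exp (-(L * θ ^ k)) * (L * θ ^ k) ^ c ≤ c * Gamma c / (1 - θ ^ c) := by
  set u : ℕ → ℝ := fun k => L * θ ^ k
  have hpos k : 0 < u k := by positivity
  have hu : Antitone u := fun j k hjk =>
    mul_le_mul_of_nonneg_left (pow_le_pow_of_le_one hθ0.le hθ1.le hjk) hL.le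
  have hθc : 0 < 1 - θ ^ c := sub_pos.mpr (rpow_lt_one hθ0.le hθ1 hc)
  have hstep k : exp (-u k) * u k ^ c * (1 - θ ^ c) ≤
      c * ∫ t in u (k + 1)..u k, exp (-t) * t ^ (c - 1) := by
    have hsucc : u (k + 1) ^ c = θ ^ c * u k ^ c := by
      rw [← mul_rpow hθ0.le (hpos k).le]; simp only [u]; ring_nf
    have hint := exp_neg_mul_rpow_sub_div_le_integral hc (hpos (k + 1)) (hu k.le_succ)
    rw [hsucc] at hint
    calc exp (-u k) * u k ^ c * (1 - θ ^ c)
        = c * (exp (-u k) * ((u k ^ c - θ ^ c * u k ^ c) / c)) := by field_simp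
      _ ≤ _ := by gcongr
  refine tsum_le_of_sum_range_le (fun k => by positivity) fun N => ?_
  rw [le_div_iff₀ hθc, Finset.sum_mul]
  calc _ ≤ ∑ k ∈ Finset.range N, c * ∫ t in u (k + 1)..u k, exp (-t) * t ^ (c - 1) :=
        Finset.sum_le_sum fun k _ => hstep k
    _ ≤ c * Gamma c := by
        rw [← Finset.mul_sum]
        exact mul_le_mul_of_nonneg_left
          (sum_integral_exp_neg_mul_rpow_le_Gamma hu hpos hc N) hc.le

lemma div_one_sub_exp_neg_le_exp {a : ℝ} (ha : 0 < a) : a / (1 - exp (-a)) ≤ exp a := by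
  have h : 0 < 1 - exp (-a) := sub_pos.mpr (exp_lt_one_iff.mpr (neg_lt_zero.mpr ha))
  rw [div_le_iff₀ h, mul_sub, mul_one, ← exp_add, add_neg_cancel, exp_zero]
  linarith [add_one_le_exp a]

/-- Lemma 3.2 (i): for `x, θ ∈ (0,1)` and `a > 0`,
`Σ_{k=1}^∞ x^{θ^k} e^{-ak} ≤ (e^a/|ln θ|) Γ(a/|ln θ|) |ln x|^{-a/|ln θ|}`. -/
theorem sum_rpow_exp_le (x θ : ℝ) (hx : x ∈ Set.Ioo (0 : ℝ) 1) (hθ : θ ∈ Set.Ioo (0 : ℝ) 1)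
    (a : ℝ) (ha : 0 < a) :
    (∑' k : ℕ, x ^ (θ ^ (k + 1)) * Real.exp (-a * ((k : ℝ) + 1))) ≤
      Real.exp a / |Real.log θ| * Real.Gamma (a / |Real.log θ|) *
        |Real.log x| ^ (-(a / |Real.log θ|)) := by
  obtain ⟨hx0, hx1⟩ := hx
  obtain ⟨hθ0, hθ1⟩ := hθ
  set b := |log θ|
  set L := |log x|
  set c := a / b
  have hb : 0 < b := abs_pos.mpr (log_neg hθ0 hθ1).ne
  have hL : 0 < L := abs_pos.mpr (log_neg hx0 hx1).ne
  have hc : 0 < c := div_pos ha hb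
  have hlogθ : log θ = -b := by simp only [b, abs_of_neg (log_neg hθ0 hθ1), neg_neg]
  have hlogx : log x = -L := by simp only [L, abs_of_neg (log_neg hx0 hx1), neg_neg]
  have hθc : θ ^ c = exp (-a) := by
    rw [rpow_def_of_pos hθ0, hlogθ, neg_mul, mul_div_cancel₀ _ hb.ne']
  have hterm (k : ℕ) : x ^ (θ ^ (k + 1)) * exp (-a * ((k : ℝ) + 1)) =
      L ^ (-c) * (exp (-(L * θ * θ ^ k)) * (L * θ * θ ^ k) ^ c) := by
    rw [rpow_def_of_pos hx0, hlogx, mul_rpow (by positivity) (by positivity),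
      mul_rpow hL.le hθ0.le, ← rpow_pow_comm hθ0.le, hθc, ← exp_nat_mul, rpow_neg hL.le]
    field_simp
    simp only [← exp_add]
    ring_nf
  calc _ = L ^ (-c) * ∑' k : ℕ, exp (-(L * θ * θ ^ k)) * (L * θ * θ ^ k) ^ c := by
        simp_rw [hterm, tsum_mul_left]
    _ ≤ L ^ (-c) * (c * Gamma c / (1 - exp (-a))) := by
        rw [← hθc]
        gcongr
        exact tsum_exp_neg_mul_rpow_geometric_le (by positivity) hθ0 hθ1 hc
    _ = a / (1 - exp (-a)) / b * Gamma c * L ^ (-c) := by ring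
    _ ≤ exp a / b * Gamma c * L ^ (-c) := by
        have hΓ := (Gamma_pos_of_pos hc).le
        gcongr
        exact div_one_sub_exp_neg_le_exp ha
end

section
/- Let x ∈ (0,1) and θ ∈ (0,1). Then for each ε > 0 and each α > 0: Σ_{k=1}^∞ x^{θ^k} k^{−1−ε} ≤ (4/ε) · α^ε · exp( ε ln ε + ε + e α^{−1} θ^{−1} ) · ( ln( α|ln x| + e ) )^{−ε}. -/
/-!
Split the series at `N = ⌈M / (2 |log θ|)⌉` with `M = log (α |log x| + e)`. For `k < N` the
factor `x ^ θ ^ (k + 1)` is at most `x ^ θ ^ N = exp (-|log x| θ ^ N)`, and `θ ^ N ≥ θ e ^ (-M / 2)`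
makes this tiny, while the weights `(k + 1) ^ (-1 - ε)` sum to at most `1 + 1 / ε`. For `k ≥ N`
the factor is at most `1` and the tail of the `p`-series telescopes to at most `N ^ (-ε) / ε`.
Both `x ^ θ ^ N` and `N ^ (-ε)` are then at most `(ε α) ^ ε exp (e / (α θ)) M ^ (-ε)`, by
`z ^ ε ≤ (ε c) ^ ε exp (z / (e c))`, which is `log t ≤ t / e` in disguise.
-/

open Real

section PSeries

variable {ε : ℝ}

theorem mul_add_one_rpow_neg_le_sub (hε : 0 ≤ ε) {a : ℝ} (ha : 0 < a) :
    ε * (a + 1) ^ (-(1 + ε)) ≤ a ^ (-ε) - (a + 1) ^ (-ε) := by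
  have hb : 0 < a + 1 := by linarith
  have hlog : (a + 1)⁻¹ ≤ log ((a + 1) / a) := by
    have := one_sub_inv_le_log_of_pos (div_pos hb ha)
    rwa [inv_div, one_sub_div hb.ne', add_sub_cancel_left, one_div] at this
  have hexp : 1 + ε * (a + 1)⁻¹ ≤ ((a + 1) / a) ^ ε := by
    rw [rpow_def_of_pos (div_pos hb ha)]
    nlinarith [add_one_le_exp (log ((a + 1) / a) * ε), mul_le_mul_of_nonneg_left hlog hε]
  calc ε * (a + 1) ^ (-(1 + ε)) = (a + 1) ^ (-ε) * (ε * (a + 1)⁻¹) := by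
        rw [neg_add, rpow_add hb, rpow_neg_one]; ring
    _ ≤ (a + 1) ^ (-ε) * (((a + 1) / a) ^ ε - 1) := by gcongr; linarith
    _ = a ^ (-ε) - (a + 1) ^ (-ε) := by
        rw [div_rpow hb.le ha.le, rpow_neg ha.le, rpow_neg hb.le]
        field_simp

theorem summable_add_one_rpow_neg (hε : 0 < ε) :
    Summable fun k : ℕ => ((k : ℝ) + 1) ^ (-(1 + ε)) := by
  have := (summable_nat_add_iff 1).2 (summable_nat_rpow.2 (by linarith : -(1 + ε) < -1))
  simpa only [Nat.cast_add, Nat.cast_one] using this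

theorem tsum_nat_add_add_one_rpow_neg_le (hε : 0 < ε) {n : ℕ} (hn : 1 ≤ n) :
    ∑' k : ℕ, (((k + n : ℕ) : ℝ) + 1) ^ (-(1 + ε)) ≤ (n : ℝ) ^ (-ε) / ε := by
  refine ((summable_nat_add_iff n).2 (summable_add_one_rpow_neg hε)).tsum_le_of_sum_range_le
    fun m => ?_
  have hstep (k : ℕ) : (((k + n : ℕ) : ℝ) + 1) ^ (-(1 + ε)) ≤
      ((((k + n : ℕ) : ℝ)) ^ (-ε) - (((k + 1 + n : ℕ) : ℝ)) ^ (-ε)) / ε := by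
    rw [le_div_iff₀ hε, mul_comm, show k + 1 + n = k + n + 1 by ring, Nat.cast_succ]
    exact mul_add_one_rpow_neg_le_sub hε.le (by positivity)
  calc ∑ k ∈ Finset.range m, (((k + n : ℕ) : ℝ) + 1) ^ (-(1 + ε))
      ≤ ∑ k ∈ Finset.range m,
          ((((k + n : ℕ) : ℝ)) ^ (-ε) - (((k + 1 + n : ℕ) : ℝ)) ^ (-ε)) / ε :=
        Finset.sum_le_sum fun k _ => hstep k
    _ = ((n : ℝ) ^ (-ε) - (((m + n : ℕ) : ℝ)) ^ (-ε)) / ε := by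
        rw [← Finset.sum_div, Finset.sum_range_sub' (fun k => (((k + n : ℕ) : ℝ)) ^ (-ε)),
          zero_add]
    _ ≤ (n : ℝ) ^ (-ε) / ε := by gcongr; exact sub_le_self _ (by positivity)

theorem tsum_add_one_rpow_neg_le (hε : 0 < ε) :
    ∑' k : ℕ, ((k : ℝ) + 1) ^ (-(1 + ε)) ≤ 1 + 1 / ε := by
  rw [(summable_add_one_rpow_neg hε).tsum_eq_zero_add]
  have := tsum_nat_add_add_one_rpow_neg_le hε le_rfl
  simp only [Nat.cast_zero, zero_add, one_rpow, Nat.cast_one] at this ⊢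
  linarith

theorem tsum_le_mul_add_rpow_neg_div {f : ℕ → ℝ} {c : ℝ} {N : ℕ} (hε : 0 < ε) (hN : 1 ≤ N)
    (hc : 0 ≤ c) (hf0 : ∀ k, 0 ≤ f k) (hf : ∀ k, f k ≤ ((k : ℝ) + 1) ^ (-(1 + ε)))
    (hhead : ∀ k < N, f k ≤ c * ((k : ℝ) + 1) ^ (-(1 + ε))) :
    ∑' k, f k ≤ c * (1 + 1 / ε) + (N : ℝ) ^ (-ε) / ε := by
  have hg := summable_add_one_rpow_neg hε
  have hfs : Summable f := hg.of_nonneg_of_le hf0 hf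
  rw [← hfs.sum_add_tsum_nat_add N]
  gcongr
  · calc ∑ k ∈ Finset.range N, f k
        ≤ c * ∑ k ∈ Finset.range N, ((k : ℝ) + 1) ^ (-(1 + ε)) := by
          rw [Finset.mul_sum]
          exact Finset.sum_le_sum fun k hk => hhead k (Finset.mem_range.1 hk)
      _ ≤ c * (1 + 1 / ε) := by
          gcongr
          exact (hg.sum_le_tsum _ fun k _ => by positivity).trans (tsum_add_one_rpow_neg_le hε)
  · exact ((summable_nat_add_iff N).2 hfs).tsum_le_tsum (fun k => hf (k + N))
      ((summable_nat_add_iff N).2 hg) |>.trans (tsum_nat_add_add_one_rpow_neg_le hε hN)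

end PSeries

theorem rpow_le_mul_rpow_mul_exp {ε c z : ℝ} (hε : 0 < ε) (hc : 0 < c) (hz : 0 < z) :
    z ^ ε ≤ (ε * c) ^ ε * exp (z / (exp 1 * c)) := by
  have hεc : 0 < ε * c := mul_pos hε hc
  have hlog : log (z / (ε * c)) ≤ z / (ε * c) / exp 1 := by
    have := log_le_sub_one_of_pos (div_pos (div_pos hz hεc) (exp_pos 1))
    rwa [log_div (div_pos hz hεc).ne' (exp_pos 1).ne', log_exp, sub_le_sub_iff_right] at this
  rw [log_div hz.ne' hεc.ne'] at hlog
  rw [rpow_def_of_pos hz, rpow_def_of_pos hεc, ← exp_add, exp_le_exp]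
  have : ε * (z / (ε * c) / exp 1) = z / (exp 1 * c) := by field_simp
  nlinarith [mul_le_mul_of_nonneg_left hlog hε.le]

theorem mul_exp_neg_le_pow_ceil {θ t : ℝ} (hθ0 : 0 < θ) (hθ1 : θ < 1) (ht : 0 ≤ t) :
    θ * exp (-t) ≤ θ ^ ⌈t / -log θ⌉₊ := by
  have hl : 0 < -log θ := neg_pos.2 (log_neg hθ0 hθ1)
  have hN := Nat.ceil_lt_add_one (div_nonneg ht hl.le)
  have := mul_lt_mul_of_pos_right hN hl
  rw [add_mul, div_mul_cancel₀ _ hl.ne', one_mul] at this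
  calc θ * exp (-t) = exp (log θ + -t) := by rw [exp_add, exp_log hθ0]
    _ ≤ exp (⌈t / -log θ⌉₊ * log θ) := exp_le_exp.2 (by linarith)
    _ = θ ^ ⌈t / -log θ⌉₊ := by rw [exp_nat_mul, exp_log hθ0]

theorem le_mul_exp_sub_div_add {M θ : ℝ} (hM : 1 ≤ M) (hθ0 : 0 < θ) (hθ1 : θ ≤ 1) :
    M ≤ exp 1 * θ * (exp M - exp 1) / exp (M / 2) + exp 1 ^ 2 / θ := by
  set s := exp (1 / 2)
  set v := exp (M / 4)
  have hs0 : 0 < s := exp_pos _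
  have hv0 : 0 < v := exp_pos _
  have he : exp 1 = s ^ 2 := by rw [← exp_nat_mul]; norm_num
  have hv2 : exp (M / 2) = v ^ 2 := by rw [← exp_nat_mul]; ring_nf
  have hv4 : exp M = v ^ 4 := by rw [← exp_nat_mul]; ring_nf
  have hs : 3 / 2 ≤ s := by linarith [add_one_le_exp (1 / 2)]
  have hsv : s ≤ v ^ 2 := by rw [← hv2]; exact exp_le_exp.2 (by linarith)
  have hMv : M ≤ 4 * (v - 1) := by linarith [add_one_le_exp (M / 4)]
  -- AM-GM, with `s = e ^ (1 / 2)`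
  have hamgm : 2 * s ^ 3 * v ≤ s ^ 2 * θ * v ^ 2 + s ^ 4 / θ := by
    rw [← sub_nonneg]
    have : s ^ 2 * θ * v ^ 2 + s ^ 4 / θ - 2 * s ^ 3 * v = (s * θ * v - s ^ 2) ^ 2 / θ := by
      field_simp; ring
    rw [this]; positivity
  have hcorr : s ^ 4 * θ / v ^ 2 ≤ s ^ 3 := by
    rw [div_le_iff₀ (by positivity)]
    nlinarith [pow_pos hs0 3, mul_le_mul_of_nonneg_left hθ1 (pow_pos hs0 4).le]
  have hsplit : exp 1 * θ * (exp M - exp 1) / exp (M / 2) =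
      s ^ 2 * θ * v ^ 2 - s ^ 4 * θ / v ^ 2 := by
    rw [he, hv2, hv4]; field_simp
  have hs3 : 2 ≤ s ^ 3 := by nlinarith [pow_le_pow_left₀ (by norm_num) hs 3]
  have hv1 : 1 ≤ v := by linarith
  rw [hsplit, he, ← pow_mul]
  nlinarith [mul_nonneg (sub_nonneg.2 hs3) (by linarith : (0 : ℝ) ≤ 2 * v - 1)]

theorem log_add_exp_one_le {a θ T : ℝ} (ha : 0 ≤ a) (hθ0 : 0 < θ) (hθ1 : θ ≤ 1)
    (hT : θ * exp (-(log (a + exp 1) / 2)) ≤ T) :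
    log (a + exp 1) ≤ exp 1 * a * T + exp 1 ^ 2 / θ := by
  set M := log (a + exp 1)
  have hae : 0 < a + exp 1 := by positivity
  have hM : 1 ≤ M := by
    rw [le_log_iff_exp_le hae]; linarith
  have ha' : a = exp M - exp 1 := by rw [exp_log hae]; ring
  calc M ≤ exp 1 * θ * (exp M - exp 1) / exp (M / 2) + exp 1 ^ 2 / θ :=
        le_mul_exp_sub_div_add hM hθ0 hθ1
    _ = exp 1 * a * (θ * exp (-(M / 2))) + exp 1 ^ 2 / θ := by
        rw [exp_neg, ha']; ring
    _ ≤ exp 1 * a * T + exp 1 ^ 2 / θ := by gcongr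

theorem rpow_mul_log_rpow_le {ε α x θ T : ℝ} (hε : 0 < ε) (hα : 0 < α) (hx0 : 0 < x)
    (hx1 : x ≤ 1) (hθ0 : 0 < θ) (hθ1 : θ ≤ 1)
    (hT : θ * exp (-(log (α * |log x| + exp 1) / 2)) ≤ T) :
    x ^ T * log (α * |log x| + exp 1) ^ ε ≤ (ε * α) ^ ε * exp (exp 1 * α⁻¹ * θ⁻¹) := by
  set L := |log x|
  set M := log (α * L + exp 1)
  have hL : 0 ≤ L := abs_nonneg _
  have hM : 0 < M := log_pos (by nlinarith [add_one_le_exp 1])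
  have hx : x ^ T = exp (-(L * T)) := by
    have hlogx : log x = -L := by simp only [L, abs_of_nonpos (log_nonpos hx0.le hx1), neg_neg]
    rw [rpow_def_of_pos hx0, hlogx, neg_mul]
  have hkey : M / (exp 1 * α) - L * T ≤ exp 1 * α⁻¹ * θ⁻¹ := by
    have := log_add_exp_one_le (mul_nonneg hα.le hL) hθ0 hθ1 hT
    rw [sub_le_iff_le_add, div_le_iff₀ (by positivity)]
    refine this.trans_eq ?_
    field_simp
    ring
  calc x ^ T * M ^ ε ≤ exp (-(L * T)) * ((ε * α) ^ ε * exp (M / (exp 1 * α))) := by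
        rw [hx]; gcongr; exact rpow_le_mul_rpow_mul_exp hε hα hM
    _ = (ε * α) ^ ε * exp (M / (exp 1 * α) - L * T) := by
        rw [exp_sub, exp_neg]; field_simp
    _ ≤ (ε * α) ^ ε * exp (exp 1 * α⁻¹ * θ⁻¹) := by gcongr

theorem nat_rpow_neg_mul_rpow_le {ε α θ M : ℝ} {N : ℕ} (hε : 0 < ε) (hα : 0 < α)
    (hθ0 : 0 < θ) (hθ1 : θ < 1) (hM : 0 < M) (hN : M / 2 / -log θ ≤ N) :
    (N : ℝ) ^ (-ε) * M ^ ε ≤ (ε * α) ^ ε * exp (exp 1 * α⁻¹ * θ⁻¹) := by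
  set l := -log θ
  have hl : 0 < l := neg_pos.2 (log_neg hθ0 hθ1)
  have hlθ : l ≤ θ⁻¹ := by
    have := log_le_sub_one_of_pos (inv_pos.2 hθ0)
    rw [log_inv] at this
    linarith
  have hq : 0 < M / 2 / l := by positivity
  have hNM : (N : ℝ) ^ (-ε) * M ^ ε ≤ (2 * l) ^ ε := by
    calc (N : ℝ) ^ (-ε) * M ^ ε ≤ (M / 2 / l) ^ (-ε) * M ^ ε := by
          gcongr ?_ * _
          exact rpow_le_rpow_of_nonpos hq hN (by linarith)
      _ = (2 * l) ^ ε := by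
          rw [rpow_neg hq.le, ← inv_rpow hq.le, ← mul_rpow (by positivity) hM.le]
          congr 1; field_simp
  have hle : 2 * l / (exp 1 * α) ≤ exp 1 * α⁻¹ * θ⁻¹ := by
    rw [div_le_iff₀ (by positivity)]
    have : exp 1 * α⁻¹ * θ⁻¹ * (exp 1 * α) = exp 1 ^ 2 * θ⁻¹ := by field_simp
    rw [this]
    have he2 : 2 ≤ exp 1 ^ 2 := by nlinarith [add_one_le_exp 1]
    nlinarith [mul_le_mul_of_nonneg_right he2 (inv_pos.2 hθ0).le]
  calc (N : ℝ) ^ (-ε) * M ^ ε ≤ (ε * α) ^ ε * exp (2 * l / (exp 1 * α)) :=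
        hNM.trans (rpow_le_mul_rpow_mul_exp hε hα (by positivity))
    _ ≤ (ε * α) ^ ε * exp (exp 1 * α⁻¹ * θ⁻¹) := by gcongr

/-- Lemma 3.2 (ii): for `x, θ ∈ (0,1)`, `ε > 0` and `α > 0`,
`Σ_{k=1}^∞ x^{θ^k} k^{-1-ε} ≤ (4/ε) α^ε e^{ε ln ε + ε + e α⁻¹ θ⁻¹} (ln(α|ln x| + e))^{-ε}`. -/
theorem sum_rpow_polynomial_le (x θ : ℝ) (hx : x ∈ Set.Ioo (0 : ℝ) 1)
    (hθ : θ ∈ Set.Ioo (0 : ℝ) 1) (ε : ℝ) (hε : 0 < ε) (α : ℝ) (hα : 0 < α) :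
    (∑' k : ℕ, x ^ (θ ^ (k + 1)) * ((k : ℝ) + 1) ^ (-(1 + ε))) ≤
      4 / ε * α ^ ε * Real.exp (ε * Real.log ε + ε + Real.exp 1 * α⁻¹ * θ⁻¹) *
        (Real.log (α * |Real.log x| + Real.exp 1)) ^ (-ε) := by
  obtain ⟨hx0, hx1⟩ := hx
  obtain ⟨hθ0, hθ1⟩ := hθ
  set M := log (α * |log x| + exp 1)
  set N := ⌈M / 2 / -log θ⌉₊
  set K := (ε * α) ^ ε * exp (exp 1 * α⁻¹ * θ⁻¹)
  have hM : 0 < M := log_pos (by nlinarith [add_one_le_exp 1, abs_nonneg (log x)])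
  have hN : 1 ≤ N := Nat.ceil_pos.2 (div_pos (half_pos hM) (neg_pos.2 (log_neg hθ0 hθ1)))
  have hdiv {c : ℝ} (h : c * M ^ ε ≤ K) : c ≤ K * M ^ (-ε) := by
    rwa [rpow_neg hM.le, ← div_eq_mul_inv, le_div_iff₀ (by positivity)]
  have hhead : x ^ θ ^ N ≤ K * M ^ (-ε) := hdiv <| rpow_mul_log_rpow_le hε hα hx0 hx1.le hθ0
    hθ1.le (mul_exp_neg_le_pow_ceil hθ0 hθ1 (by positivity))
  have htail : (N : ℝ) ^ (-ε) ≤ K * M ^ (-ε) :=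
    hdiv <| nat_rpow_neg_mul_rpow_le hε hα hθ0 hθ1 hM (Nat.le_ceil _)
  have hsum := tsum_le_mul_add_rpow_neg_div (c := x ^ θ ^ N) hε hN (by positivity)
    (fun k => by positivity)
    (fun k => mul_le_of_le_one_left (by positivity) (rpow_le_one hx0.le hx1.le (by positivity)))
    (fun k hk => mul_le_mul_of_nonneg_right
      (rpow_le_rpow_of_exponent_ge hx0 hx1.le (pow_le_pow_of_le_one hθ0.le hθ1.le hk))
      (by positivity))
  have hεε : exp (ε * log ε) = ε ^ ε := by rw [rpow_def_of_pos hε, mul_comm]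
  calc _ ≤ x ^ θ ^ N * (1 + 1 / ε) + (N : ℝ) ^ (-ε) / ε := hsum
    _ ≤ K * M ^ (-ε) * (1 + 1 / ε) + K * M ^ (-ε) / ε := by gcongr
    _ = K * M ^ (-ε) * (ε + 2) / ε := by field_simp; ring
    _ ≤ K * M ^ (-ε) * (4 * exp ε) / ε := by gcongr; linarith [add_one_le_exp ε]
    _ = _ := by
        simp only [K]
        rw [exp_add, exp_add, hεε, mul_rpow hε.le hα.le]
        ring
end
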